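/- Torus part of the symplectic Bruhat decomposition (anchor entry): assume r ≥ 2, let X be an r×2m matrix over F whose first column equals x·e_r for some x ∈ F (i.e. X_{k,1} = 0 for k < r and X_{r,1} = x), and let Y ∈ GL_r(F). Then the (2m,1) entry of S(X,Y) equals x² (Y^{-1})_{1,r} = (−1)^{r+1} x² det(Y^{(r−1)})/det(Y), where Y^{(r−1)} denotes the upper-right (r−1)×(r−1) corner submatrix of Y (rows 1,…,r−1 and columns 2,…,r). Consequently, if v_1, v_2 ∈ GL_{2m}(F) are upper-triangular unipotent and t_2 = diag(a_1, …, a_m, a_m^{-1}, …, a_1^{-1}) is an invertible diagonal matrix such that v_2 · S(X,Y) · v_1 = −t_2^{-1} J'_{2m}, then a_1 = (−1)^{r+1} x² det(Y^{(r−1)})/det(Y). -/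

import Mathlib

/-!
The last row of `J'_{2m}` is `-e₁ᵀ`, the last column of `J_r` is `e₁` and the first column of `X`
is `x e_r`, so at entry `(2m, 1)` the product `J'_{2m} Xᵀ (Y⁻¹)ᵀ J_r X` collapses to
`-x² (Y⁻¹)_{1,r}`, and the cofactor formula gives `(Y⁻¹)_{1,r} = (-1)^{r+1} det Y^{(r-1)} / det Y`.
Multiplying by upper-triangular unipotent matrices on both sides does not change the bottom-left
entry, so it equals the bottom-left entry of `-t₂⁻¹ J'_{2m}`, which is `a₁`.
-/

open Matrix

namespace RS

variable (F : Type*) [Field F]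

/-- The matrix `J_k`: its `(i, k+1-i)` entry (1-indexed) is `(-1)^(i-1)`, i.e. in 0-indexed
terms the `(i,j)` entry is `(-1)^i` when `i + j = k - 1`, and all other entries are `0`. -/
def Jmat (k : ℕ) : Matrix (Fin k) (Fin k) F :=
  Matrix.of fun i j => if (i : ℕ) + (j : ℕ) = k - 1 then (-1 : F) ^ (i : ℕ) else 0

/-- A 2×2 block matrix with blocks of sizes `a, b` (rows) and `c, d` (columns), realized on
`Fin (a+b) × Fin (c+d)`. -/
def blk2 {a b c d : ℕ} (A : Matrix (Fin a) (Fin c) F) (B : Matrix (Fin a) (Fin d) F)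
    (C : Matrix (Fin b) (Fin c) F) (D : Matrix (Fin b) (Fin d) F) :
    Matrix (Fin (a + b)) (Fin (c + d)) F :=
  Matrix.of fun i j =>
    if hi : (i : ℕ) < a then
      if hj : (j : ℕ) < c then A ⟨(i : ℕ), hi⟩ ⟨(j : ℕ), hj⟩
      else B ⟨(i : ℕ), hi⟩ ⟨(j : ℕ) - c, by have := j.isLt; omega⟩
    else
      if hj : (j : ℕ) < c then C ⟨(i : ℕ) - a, by have := i.isLt; omega⟩ ⟨(j : ℕ), hj⟩
      else D ⟨(i : ℕ) - a, by have := i.isLt; omega⟩ ⟨(j : ℕ) - c, by have := j.isLt; omega⟩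

/-- A 3×3 block (square) matrix with blocks of sizes `a, b, c`, realized on `Fin (a+b+c)`. -/
def blk3 {a b c : ℕ}
    (A11 : Matrix (Fin a) (Fin a) F) (A12 : Matrix (Fin a) (Fin b) F)
    (A13 : Matrix (Fin a) (Fin c) F)
    (A21 : Matrix (Fin b) (Fin a) F) (A22 : Matrix (Fin b) (Fin b) F)
    (A23 : Matrix (Fin b) (Fin c) F)
    (A31 : Matrix (Fin c) (Fin a) F) (A32 : Matrix (Fin c) (Fin b) F)
    (A33 : Matrix (Fin c) (Fin c) F) :
    Matrix (Fin (a + b + c)) (Fin (a + b + c)) F :=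
  Matrix.of fun i j =>
    if hi1 : (i : ℕ) < a then
      if hj1 : (j : ℕ) < a then A11 ⟨(i : ℕ), hi1⟩ ⟨(j : ℕ), hj1⟩
      else if hj2 : (j : ℕ) < a + b then A12 ⟨(i : ℕ), hi1⟩ ⟨(j : ℕ) - a, by omega⟩
      else A13 ⟨(i : ℕ), hi1⟩ ⟨(j : ℕ) - (a + b), by have := j.isLt; omega⟩
    else if hi2 : (i : ℕ) < a + b then
      if hj1 : (j : ℕ) < a then A21 ⟨(i : ℕ) - a, by omega⟩ ⟨(j : ℕ), hj1⟩
      else if hj2 : (j : ℕ) < a + b then A22 ⟨(i : ℕ) - a, by omega⟩ ⟨(j : ℕ) - a, by omega⟩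
      else A23 ⟨(i : ℕ) - a, by omega⟩ ⟨(j : ℕ) - (a + b), by have := j.isLt; omega⟩
    else
      if hj1 : (j : ℕ) < a then A31 ⟨(i : ℕ) - (a + b), by have := i.isLt; omega⟩ ⟨(j : ℕ), hj1⟩
      else if hj2 : (j : ℕ) < a + b then
        A32 ⟨(i : ℕ) - (a + b), by have := i.isLt; omega⟩ ⟨(j : ℕ) - a, by omega⟩
      else A33 ⟨(i : ℕ) - (a + b), by have := i.isLt; omega⟩
        ⟨(j : ℕ) - (a + b), by have := j.isLt; omega⟩

/-- `J'_{2k}`, the `2k×2k` block matrix `[[0, J_k], [-J_kᵀ, 0]]`. -/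
def Jp (k : ℕ) : Matrix (Fin (k + k)) (Fin (k + k)) F :=
  blk2 F 0 (Jmat F k) (-(Jmat F k)ᵀ) 0

/-- `Sp_{2N}(F) = {h ∈ GL_{2N}(F) : hᵀ J'_{2N} h = J'_{2N}}`. -/
def Sp (N : ℕ) : Set (Matrix (Fin (N + N)) (Fin (N + N)) F) :=
  {h | IsUnit h ∧ hᵀ * Jp F N * h = Jp F N}

/-- `θ_r(g) = J_r (g⁻¹)ᵀ J_r⁻¹`. -/
noncomputable def theta (r : ℕ) (g : Matrix (Fin r) (Fin r) F) : Matrix (Fin r) (Fin r) F :=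
  Jmat F r * (g⁻¹)ᵀ * (Jmat F r)⁻¹

/-- `θ_{r,m}(X) = (-1)^r J'_{2m} Xᵀ J_r`. -/
def thetaRM (r m : ℕ) (X : Matrix (Fin r) (Fin (m + m)) F) : Matrix (Fin (m + m)) (Fin r) F :=
  (-1 : F) ^ r • (Jp F m * Xᵀ * Jmat F r)

/-- `n(X,Y) = [[I_r, X, Y], [0, I_{2m}, θ_{r,m}(X)], [0, 0, I_r]]` (block sizes `r, 2m, r`). -/
def nMat (r m : ℕ) (X : Matrix (Fin r) (Fin (m + m)) F) (Y : Matrix (Fin r) (Fin r) F) :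
    Matrix (Fin (r + (m + m) + r)) (Fin (r + (m + m) + r)) F :=
  blk3 F 1 X Y 0 1 (thetaRM F r m X) 0 0 1

/-- `n̄(X,Y) = [[I_r, 0, 0], [(-1)^r J'_{2m} Xᵀ J_r, I_{2m}, 0], [(-1)^r Y, (-1)^r X, I_r]]`. -/
def nbarMat (r m : ℕ) (X : Matrix (Fin r) (Fin (m + m)) F) (Y : Matrix (Fin r) (Fin r) F) :
    Matrix (Fin (r + (m + m) + r)) (Fin (r + (m + m) + r)) F :=
  blk3 F 1 0 0 ((-1 : F) ^ r • (Jp F m * Xᵀ * Jmat F r)) 1 0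
    ((-1 : F) ^ r • Y) ((-1 : F) ^ r • X) 1

/-- `ẇ_0 = [[0, 0, I_r], [0, I_{2m}, 0], [(-1)^r I_r, 0, 0]]`. -/
def w0 (r m : ℕ) : Matrix (Fin (r + (m + m) + r)) (Fin (r + (m + m) + r)) F :=
  blk3 F 0 0 1 0 1 0 ((-1 : F) ^ r • (1 : Matrix (Fin r) (Fin r) F)) 0 0

/-- `S(X,Y) = I_{2m} - J'_{2m} Xᵀ (Y⁻¹)ᵀ J_r X`. -/
noncomputable def Smat (r m : ℕ) (X : Matrix (Fin r) (Fin (m + m)) F) (Y : Matrix (Fin r) (Fin r) F) :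
    Matrix (Fin (m + m)) (Fin (m + m)) F :=
  1 - Jp F m * Xᵀ * (Y⁻¹)ᵀ * Jmat F r * X

/-- The block diagonal matrix `diag(m₁, m₂, θ_r(m₁))`. -/
noncomputable def levi (r m : ℕ) (m1 : Matrix (Fin r) (Fin r) F)
    (m2 : Matrix (Fin (m + m)) (Fin (m + m)) F) :
    Matrix (Fin (r + (m + m) + r)) (Fin (r + (m + m) + r)) F :=
  blk3 F m1 0 0 0 m2 0 0 0 (theta F r m1)

/-- `m(X,Y) = diag(θ_r(Y), S(X,Y)⁻¹, Y)`. -/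
noncomputable def mMat (r m : ℕ) (X : Matrix (Fin r) (Fin (m + m)) F) (Y : Matrix (Fin r) (Fin r) F) :
    Matrix (Fin (r + (m + m) + r)) (Fin (r + (m + m) + r)) F :=
  blk3 F (theta F r Y) 0 0 0 (Smat F r m X Y)⁻¹ 0 0 0 Y

/-- `α^∨(t) = diag(t·I_r, I_{2m}, t⁻¹·I_r)`. -/
def coroot (r m : ℕ) (t : Fˣ) :
    Matrix (Fin (r + (m + m) + r)) (Fin (r + (m + m) + r)) F :=
  blk3 F ((t : F) • (1 : Matrix (Fin r) (Fin r) F)) 0 0 0 1 0 0 0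
    (((t⁻¹ : Fˣ) : F) • (1 : Matrix (Fin r) (Fin r) F))

/-- Transport of a `2n×2n` matrix written with block sizes `(r, 2m, r)` to the canonical
index type `Fin ((r+m)+(r+m))` (where `n = r + m`), along the obvious cast. -/
def toSp (r m : ℕ) (M : Matrix (Fin (r + (m + m) + r)) (Fin (r + (m + m) + r)) F) :
    Matrix (Fin ((r + m) + (r + m))) (Fin ((r + m) + (r + m))) F :=
  Matrix.reindex (finCongr (by omega)) (finCongr (by omega)) M

/-- Upper-triangular unipotent matrices. -/
def UTU {k : ℕ} (u : Matrix (Fin k) (Fin k) F) : Prop :=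
  (∀ i, u i i = 1) ∧ ∀ i j : Fin k, (j : ℕ) < (i : ℕ) → u i j = 0

/-- A row vector as a `1 × k` matrix. -/
def rowVec {k : ℕ} (v : Fin k → F) : Matrix (Fin 1) (Fin k) F := Matrix.of fun _ j => v j

/-- A column vector as a `k × 1` matrix. -/
def colVec {k : ℕ} (v : Fin k → F) : Matrix (Fin k) (Fin 1) F := Matrix.of fun i _ => v i

/-- A scalar as a `1 × 1` matrix. -/
def scMat (x : F) : Matrix (Fin 1) (Fin 1) F := Matrix.of fun _ _ => x

/-- `Y_i`: the lower-left `i×i` corner submatrix of `Y` (rows `r-i+1,…,r`, columns `1,…,i`,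
1-indexed). -/
def llCorner (r : ℕ) (Y : Matrix (Fin r) (Fin r) F) (i : ℕ) (h : i ≤ r) :
    Matrix (Fin i) (Fin i) F :=
  Matrix.of fun a b =>
    Y ⟨r - i + (a : ℕ), by have := a.isLt; omega⟩ ⟨(b : ℕ), by have := b.isLt; omega⟩

/-- `Y^{(r-1)}`: the upper-right `(r-1)×(r-1)` corner submatrix of `Y` (rows `1,…,r-1`,
columns `2,…,r`, 1-indexed). -/
def urCorner (r : ℕ) (Y : Matrix (Fin r) (Fin r) F) :
    Matrix (Fin (r - 1)) (Fin (r - 1)) F :=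
  Matrix.of fun a b =>
    Y ⟨(a : ℕ), by have := a.isLt; omega⟩ ⟨(b : ℕ) + 1, by have := b.isLt; omega⟩

/-- `J₀`: the central `(2m-2)×(2m-2)` submatrix of `J'_{2m}` (rows and columns `2,…,2m-1`). -/
def J0 (m : ℕ) : Matrix (Fin (m + m - 2)) (Fin (m + m - 2)) F :=
  Matrix.of fun i j =>
    Jp F m ⟨(i : ℕ) + 1, by have := i.isLt; omega⟩ ⟨(j : ℕ) + 1, by have := j.isLt; omega⟩

/-- `diag(t₁,…,t_n, t_n⁻¹,…,t₁⁻¹)` (with `n = r + m`), realized on the index type with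
block sizes `(r, 2m, r)`. -/
def torus (r m : ℕ) (t : Fin (r + m) → Fˣ) :
    Matrix (Fin (r + (m + m) + r)) (Fin (r + (m + m) + r)) F :=
  Matrix.diagonal fun i =>
    if h : (i : ℕ) < r + m then ((t ⟨(i : ℕ), h⟩ : Fˣ) : F)
    else (((t ⟨r + (m + m) + r - 1 - (i : ℕ), by have := i.isLt; omega⟩)⁻¹ : Fˣ) : F)

/-- `Y_{i,j}`: the `(j-1)×(j-1)` submatrix of `Y` on the rows `{r-j+1,…,r} \ {r-i+1}` and the
columns `1,…,j-1` (all 1-indexed). -/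
def subDelRow (r : ℕ) (Y : Matrix (Fin r) (Fin r) F) (i j : ℕ)
    (hi : 1 ≤ i) (hij : i < j) (hj : j ≤ r) : Matrix (Fin (j - 1)) (Fin (j - 1)) F :=
  Matrix.of fun a b =>
    Y (if h : r - j + (a : ℕ) < r - i then
          (⟨r - j + (a : ℕ), by have := a.isLt; omega⟩ : Fin r)
        else (⟨r - j + (a : ℕ) + 1, by have := a.isLt; omega⟩ : Fin r))
      ⟨(b : ℕ), by have := b.isLt; omega⟩

/-- `Y'_{i,j}`: the `(r-i)×(r-i)` submatrix of `Y` on the rows `i+1,…,r` and the columns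
`{1,…,r-i+1} \ {r-j+1}` (all 1-indexed). -/
def subDelCol (r : ℕ) (Y : Matrix (Fin r) (Fin r) F) (i j : ℕ)
    (hi : 1 ≤ i) (hij : i < j) (hj : j ≤ r) : Matrix (Fin (r - i)) (Fin (r - i)) F :=
  Matrix.of fun a b =>
    Y ⟨i + (a : ℕ), by have := a.isLt; omega⟩
      (if h : (b : ℕ) < r - j then (⟨(b : ℕ), by have := b.isLt; omega⟩ : Fin r)
        else (⟨(b : ℕ) + 1, by have := b.isLt; omega⟩ : Fin r))

section SingleRowCol

variable {l n o α : Type*} [Fintype n] [DecidableEq n] [NonUnitalNonAssocSemiring α]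

lemma mul_apply_of_row_eq_single {A : Matrix l n α} {i : l} {k : n} {c : α}
    (hA : A i = Pi.single k c) (B : Matrix n o α) (j : o) : (A * B) i j = c * B k j := by
  rw [mul_apply_eq_vecMul, hA, single_vecMul]
  rfl

lemma mul_apply_of_col_eq_single {B : Matrix n o α} {j : o} {k : n} {c : α}
    (hB : Bᵀ j = Pi.single k c) (A : Matrix l n α) (i : l) : (A * B) i j = A i k * c := by
  change A i ⬝ᵥ Bᵀ j = _
  rw [hB, dotProduct_single]

end SingleRowCol

lemma Jp_row_last (m : ℕ) (hm : 0 < m) :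
    Jp F m ⟨m + m - 1, by omega⟩ = Pi.single ⟨0, by omega⟩ (-1) := by
  funext j
  simp only [Jp, blk2, Jmat, of_apply, Matrix.neg_apply, transpose_apply, Pi.single_apply,
    Fin.ext_iff]
  split_ifs <;> simp_all <;> omega

lemma Jmat_transpose_last (r : ℕ) (hr : 0 < r) :
    (Jmat F r)ᵀ ⟨r - 1, by omega⟩ = Pi.single ⟨0, by omega⟩ 1 := by
  funext i
  simp only [Jmat, transpose_apply, of_apply, Pi.single_apply, Fin.ext_iff]
  split_ifs <;> simp_all

lemma UTU.row_last {k : ℕ} (hk : 0 < k) {u : Matrix (Fin k) (Fin k) F} (hu : UTU F u) :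
    u ⟨k - 1, by omega⟩ = Pi.single ⟨k - 1, by omega⟩ 1 := by
  funext j
  rcases eq_or_ne j ⟨k - 1, by omega⟩ with rfl | hj
  · rw [Pi.single_eq_same, hu.1]
  · rw [Pi.single_eq_of_ne hj, hu.2]
    have := j.isLt
    rw [Ne, Fin.ext_iff] at hj
    dsimp only at hj ⊢
    omega

lemma UTU.transpose_zero {k : ℕ} (hk : 0 < k) {u : Matrix (Fin k) (Fin k) F} (hu : UTU F u) :
    uᵀ ⟨0, hk⟩ = Pi.single ⟨0, hk⟩ 1 := by
  funext j
  rcases eq_or_ne j ⟨0, hk⟩ with rfl | hj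
  · rw [Pi.single_eq_same, transpose_apply, hu.1]
  · rw [Pi.single_eq_of_ne hj, transpose_apply, hu.2]
    rw [Ne, Fin.ext_iff] at hj
    dsimp only at hj ⊢
    omega

lemma inv_apply_zero_last {n : ℕ} (Y : Matrix (Fin (n + 1)) (Fin (n + 1)) F) :
    Y⁻¹ 0 (Fin.last n) = (-1) ^ n * (Y.submatrix Fin.castSucc Fin.succ).det / Y.det := by
  rw [inv_def, Ring.inverse_eq_inv, Matrix.smul_apply, adjugate_fin_succ_eq_det_submatrix,
    Fin.succAbove_last, Fin.succAbove_zero, smul_eq_mul]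
  simp only [Fin.val_last, Fin.val_zero, add_zero]
  ring

lemma inv_apply_zero_sub_one (r : ℕ) (hr : 0 < r) (Y : Matrix (Fin r) (Fin r) F) :
    Y⁻¹ ⟨0, hr⟩ ⟨r - 1, by omega⟩ = (-1) ^ (r + 1) * (urCorner F r Y).det / Y.det := by
  obtain ⟨n, rfl⟩ : ∃ n, r = n + 1 := ⟨r - 1, by omega⟩
  rw [show (-1 : F) ^ (n + 1 + 1) = (-1) ^ n by ring]
  exact inv_apply_zero_last F Y

lemma Smat_apply_last_zero (r m : ℕ) (hr : 0 < r) (hm : 0 < m) (x : F)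
    (X : Matrix (Fin r) (Fin (m + m)) F) (hX : Xᵀ ⟨0, by omega⟩ = Pi.single ⟨r - 1, by omega⟩ x)
    (Y : Matrix (Fin r) (Fin r) F) :
    Smat F r m X Y ⟨m + m - 1, by omega⟩ ⟨0, by omega⟩ =
      x ^ 2 * Y⁻¹ ⟨0, hr⟩ ⟨r - 1, by omega⟩ := by
  rw [Smat, Matrix.sub_apply, one_apply_ne (by simp [Fin.ext_iff]; omega),
    mul_apply_of_col_eq_single hX, mul_apply_of_col_eq_single (Jmat_transpose_last F r hr),
    Matrix.mul_assoc, mul_apply_of_row_eq_single (Jp_row_last F m hm),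
    mul_apply_of_row_eq_single hX, transpose_apply]
  ring

lemma UTU.mul_mul_apply_last_zero {k : ℕ} (hk : 0 < k) {u v : Matrix (Fin k) (Fin k) F}
    (hu : UTU F u) (hv : UTU F v) (S : Matrix (Fin k) (Fin k) F) :
    (u * S * v) ⟨k - 1, by omega⟩ ⟨0, hk⟩ = S ⟨k - 1, by omega⟩ ⟨0, hk⟩ := by
  rw [mul_apply_of_col_eq_single (hv.transpose_zero F hk),
    mul_apply_of_row_eq_single (hu.row_last F hk), one_mul, mul_one]

lemma inv_diagonal_of_ne_zero {n : Type*} [Fintype n] [DecidableEq n] {d : n → F} (hd : ∀ i, d i ≠ 0) :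
    (diagonal d)⁻¹ = diagonal d⁻¹ :=
  inv_eq_left_inv <| by
    rw [diagonal_mul_diagonal, ← diagonal_one]
    exact congrArg diagonal (funext fun i => inv_mul_cancel₀ (hd i))

lemma apply_last_zero_of_UTU_mul_mul_eq (m : ℕ) (hm : 0 < m)
    {S v1 v2 : Matrix (Fin (m + m)) (Fin (m + m)) F} (hv1 : UTU F v1) (hv2 : UTU F v2)
    {d : Fin (m + m) → F} (hd : ∀ i, d i ≠ 0) (h : v2 * S * v1 = -((diagonal d)⁻¹ * Jp F m)) :
    S ⟨m + m - 1, by omega⟩ ⟨0, by omega⟩ = (d ⟨m + m - 1, by omega⟩)⁻¹ := by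
  rw [← hv2.mul_mul_apply_last_zero F (by omega) hv1 S, h, neg_apply,
    inv_diagonal_of_ne_zero F hd, diagonal_mul, Jp_row_last F m hm, Pi.single_eq_same,
    Pi.inv_apply]
  ring

/-- Torus part of the symplectic Bruhat decomposition (anchor entry). -/
theorem symplectic_anchor_entry (r m : ℕ) (hr : 2 ≤ r) (hm : 1 ≤ m)
    (x : F) (X : Matrix (Fin r) (Fin (m + m)) F)
    (hX : ∀ k : Fin r, X k ⟨0, by omega⟩ = if (k : ℕ) = r - 1 then x else 0)
    (Y : Matrix (Fin r) (Fin r) F) :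
    Smat F r m X Y ⟨m + m - 1, by omega⟩ ⟨0, by omega⟩ =
      x ^ 2 * Y⁻¹ ⟨0, by omega⟩ ⟨r - 1, by omega⟩ ∧
    Smat F r m X Y ⟨m + m - 1, by omega⟩ ⟨0, by omega⟩ =
      (-1 : F) ^ (r + 1) * x ^ 2 * (urCorner F r Y).det / Y.det ∧
    (∀ (v1 v2 : Matrix (Fin (m + m)) (Fin (m + m)) F) (a : Fin m → Fˣ),
      UTU F v1 → UTU F v2 →
      v2 * Smat F r m X Y * v1 =
        -((Matrix.diagonal fun i : Fin (m + m) =>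
            if h : (i : ℕ) < m then ((a ⟨(i : ℕ), h⟩ : Fˣ) : F)
            else (((a ⟨m + m - 1 - (i : ℕ), by have := i.isLt; omega⟩)⁻¹ : Fˣ) : F))⁻¹ *
          Jp F m) →
      ((a ⟨0, by omega⟩ : Fˣ) : F) =
        (-1 : F) ^ (r + 1) * x ^ 2 * (urCorner F r Y).det / Y.det) := by
  have hXcol : Xᵀ ⟨0, by omega⟩ = Pi.single ⟨r - 1, by omega⟩ x := by
    funext k
    simp [hX, Pi.single_apply, Fin.ext_iff]
  have hS := Smat_apply_last_zero F r m (by omega) (by omega) x X hXcol Y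
  have hS_det : Smat F r m X Y ⟨m + m - 1, by omega⟩ ⟨0, by omega⟩ =
      (-1 : F) ^ (r + 1) * x ^ 2 * (urCorner F r Y).det / Y.det := by
    rw [hS, inv_apply_zero_sub_one F r (by omega)]
    ring
  refine ⟨hS, hS_det, fun v1 v2 a hv1 hv2 h => ?_⟩
  rw [← hS_det, apply_last_zero_of_UTU_mul_mul_eq F m (by omega) hv1 hv2
    (fun i => by split_ifs <;> exact Units.ne_zero _) h]
  simp [show ¬m + m - 1 < m by omega]

end RS
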